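/- Let λ be an infinite cardinal with λ^{ℵ₀} = λ. Then for every stationary S ⊆ λ⁺, ◊*_S holds if and only if ◊⁺_S holds. -/

import Mathlib

noncomputable section

namespace DiamondSurvey

open Cardinal

/-- `λ⁺`, the successor cardinal of `lam`, identified with its initial ordinal. -/
def succOrd (lam : Cardinal.{0}) : Ordinal.{0} :=
  (Order.succ lam).ord

/-- `λ⁺⁺`, identified with its initial ordinal. -/
def succ2Ord (lam : Cardinal.{0}) : Ordinal.{0} :=
  (Order.succ (Order.succ lam)).ord

/-- `C` is a club in `κ`: a subset of `κ` that is unbounded in `κ` and closed under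
suprema of its nonempty bounded subsets. -/
def IsClubIn (C : Set Ordinal.{0}) (κ : Ordinal.{0}) : Prop :=
  C ⊆ Set.Iio κ ∧ (∀ α < κ, ∃ β ∈ C, α ≤ β) ∧
    ∀ s ⊆ C, s.Nonempty → sSup s < κ → sSup s ∈ C

/-- `S` is stationary in `κ`: it meets every club in `κ`. -/
def IsStationaryIn (S : Set Ordinal.{0}) (κ : Ordinal.{0}) : Prop :=
  ∀ C, IsClubIn C κ → (S ∩ C).Nonempty

/-- the cofinality of a cardinal -/
def cofC (lam : Cardinal.{0}) : Cardinal.{0} := lam.ord.cof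

/-- `E^{λ⁺}_σ = {α < λ⁺ : cf(α) = σ}` -/
def Eeq (lam σ : Cardinal.{0}) : Set Ordinal.{0} :=
  {α | α < succOrd lam ∧ α.cof = σ}

/-- `E^{λ⁺}_{≠ cf(λ)} = {α < λ⁺ : α limit, cf(α) ≠ cf(λ)}` -/
def Ene (lam : Cardinal.{0}) : Set Ordinal.{0} :=
  {α | α < succOrd lam ∧ Order.IsSuccLimit α ∧ α.cof ≠ cofC lam}

/-- `E^{λ⁺}_{< λ} = {α < λ⁺ : α limit, cf(α) < λ}` -/
def Elt (lam : Cardinal.{0}) : Set Ordinal.{0} :=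
  {α | α < succOrd lam ∧ Order.IsSuccLimit α ∧ α.cof < lam}

/-- `tr(S) = {γ < κ : cf(γ) > ω and S ∩ γ is stationary in γ}` -/
def tr (κ : Ordinal.{0}) (S : Set Ordinal.{0}) : Set Ordinal.{0} :=
  {γ | γ < κ ∧ Cardinal.aleph0 < γ.cof ∧ IsStationaryIn (S ∩ Set.Iio γ) γ}

/-- Jensen's diamond principle `◊_S`. -/
def Diamond (lam : Cardinal.{0}) (S : Set Ordinal.{0}) : Prop :=
  ∃ A : Ordinal.{0} → Set Ordinal.{0},
    (∀ α ∈ S, A α ⊆ Set.Iio α) ∧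
    ∀ Z : Set Ordinal.{0}, Z ⊆ Set.Iio (succOrd lam) →
      IsStationaryIn {α | α ∈ S ∧ Z ∩ Set.Iio α = A α} (succOrd lam)

/-- `◊*_S` -/
def DiamondStar (lam : Cardinal.{0}) (S : Set Ordinal.{0}) : Prop :=
  ∃ A : Ordinal.{0} → Set (Set Ordinal.{0}),
    (∀ α ∈ S, (∀ X ∈ A α, X ⊆ Set.Iio α) ∧ #(A α) ≤ Cardinal.lift.{1} lam) ∧
    ∀ Z : Set Ordinal.{0}, Z ⊆ Set.Iio (succOrd lam) →
      ∃ C, IsClubIn C (succOrd lam) ∧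
        ∀ α ∈ C ∩ S, Z ∩ Set.Iio α ∈ A α

/-- `◊⁺_S` -/
def DiamondPlus (lam : Cardinal.{0}) (S : Set Ordinal.{0}) : Prop :=
  ∃ A : Ordinal.{0} → Set (Set Ordinal.{0}),
    (∀ α ∈ S, (∀ X ∈ A α, X ⊆ Set.Iio α) ∧ #(A α) ≤ Cardinal.lift.{1} lam) ∧
    ∀ Z : Set Ordinal.{0}, Z ⊆ Set.Iio (succOrd lam) →
      ∃ C, IsClubIn C (succOrd lam) ∧
        ∀ α ∈ C ∩ S, Z ∩ Set.Iio α ∈ A α ∧ C ∩ Set.Iio α ∈ A α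

/-- `◊^{λ⁺}_{λ⁺}` -/
def DiamondTr (lam : Cardinal.{0}) : Prop :=
  ∃ A : Ordinal.{0} → Set (Set Ordinal.{0}),
    (∀ α < succOrd lam, (∀ X ∈ A α, X ⊆ Set.Iio α) ∧ #(A α) ≤ Cardinal.lift.{1} lam) ∧
    ∀ Z : Set Ordinal.{0}, Z ⊆ Set.Iio (succOrd lam) →
      ¬ IsStationaryIn
        (tr (succOrd lam) {α | α < succOrd lam ∧ Z ∩ Set.Iio α ∉ A α}) (succOrd lam)

/-- `♣⁻_S` -/
def ClubMinus (lam : Cardinal.{0}) (S : Set Ordinal.{0}) : Prop :=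
  ∃ A : Ordinal.{0} → Set (Set Ordinal.{0}),
    (∀ α ∈ S, (∀ X ∈ A α, X ⊆ Set.Iio α ∧ #X < Cardinal.lift.{1} lam) ∧
      #(A α) ≤ Cardinal.lift.{1} lam) ∧
    ∀ Z : Set Ordinal.{0}, Z ⊆ Set.Iio (succOrd lam) →
      (∀ β < succOrd lam, ∃ γ ∈ Z, β ≤ γ) →
      IsStationaryIn {α | α ∈ S ∧ ∃ X ∈ A α, sSup (Z ∩ X) = α} (succOrd lam)

/-- the order type of a set of ordinals -/
def otp (s : Set Ordinal.{0}) : Ordinal.{1} :=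
  Ordinal.type (Subrel ((· < ·) : Ordinal.{0} → Ordinal.{0} → Prop) (· ∈ s))

/-- the weak square principle `□*_λ` -/
def SquareStar (lam : Cardinal.{0}) : Prop :=
  ∃ 𝒞 : Ordinal.{0} → Set (Set Ordinal.{0}),
    ∀ α, α < succOrd lam → Order.IsSuccLimit α →
      (𝒞 α).Nonempty ∧ #(𝒞 α) ≤ Cardinal.lift.{1} lam ∧
      (∀ C ∈ 𝒞 α, IsClubIn C α) ∧
      (α.cof < lam → ∀ C ∈ 𝒞 α, otp C < Ordinal.lift.{1} lam.ord) ∧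
      (∀ C ∈ 𝒞 α, ∀ β < α, sSup (C ∩ Set.Iio β) = β → C ∩ Set.Iio β ∈ 𝒞 β)

/-- `T ∈ I[S;λ]` -/
def InIdealISL (lam : Cardinal.{0}) (S T : Set Ordinal.{0}) : Prop :=
  T ⊆ tr (succOrd lam) S ∧
  ∃ d : Ordinal.{0} → Ordinal.{0} → Ordinal.{0},
    (∀ α β, α < β → β < succOrd lam → d α β < (cofC lam).ord) ∧
    (∀ α β γ, α < β → β < γ → γ < succOrd lam → d α γ ≤ max (d α β) (d β γ)) ∧
    (∀ i < (cofC lam).ord, ∀ β < succOrd lam,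
      #{α : Ordinal.{0} | α < β ∧ d α β ≤ i} < Cardinal.lift.{1} lam) ∧
    ∃ C, IsClubIn C (succOrd lam) ∧
      ∀ γ ∈ T ∩ C, cofC lam < γ.cof →
        ∃ Sg ⊆ S ∩ Set.Iio γ, IsStationaryIn Sg γ ∧
          sSup {x : Ordinal.{0} | ∃ α ∈ Sg, ∃ β ∈ Sg, α < β ∧ x = d α β} < (cofC lam).ord

/-- the stationary approachability property `SAP_λ` -/
def SAP (lam : Cardinal.{0}) : Prop :=
  ∀ S ⊆ Eeq lam (cofC lam), IsStationaryIn S (succOrd lam) →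
    IsStationaryIn (tr (succOrd lam) S) (succOrd lam) →
    ∃ T, InIdealISL lam S T ∧ IsStationaryIn T (succOrd lam)

/-- the reflection principle `R₁(θ,κ)` -/
def R1 (θ κ : Cardinal.{0}) : Prop :=
  ∀ f : Ordinal.{0} → Ordinal.{0},
    (∀ α, α < θ.ord → Order.IsSuccLimit α → α.cof < κ → f α < κ.ord) →
    ∃ j < κ.ord,
      IsStationaryIn
        {δ | δ < θ.ord ∧ δ.cof = κ ∧
          IsStationaryIn
            ({α | α < θ.ord ∧ Order.IsSuccLimit α ∧ α.cof < κ ∧ f α < j} ∩ Set.Iio δ) δ}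
        θ.ord

/-- the weak diamond principle `Φ_S` -/
def WeakDiamond (lam : Cardinal.{0}) (S : Set Ordinal.{0}) : Prop :=
  ∀ F : (α : Ordinal.{0}) → (Set.Iio α → Bool) → Bool,
    ∃ g : Ordinal.{0} → Bool,
      ∀ f : Ordinal.{0} → Bool,
        IsStationaryIn {α | α ∈ S ∧ F α (fun β => f β.1) = g α} (succOrd lam)

/-- `L` is a ladder system on `S` -/
def IsLadderSystem (S : Set Ordinal.{0}) (L : Ordinal.{0} → Set Ordinal.{0}) : Prop :=
  ∀ α ∈ S, L α ⊆ Set.Iio α ∧ sSup (L α) = α ∧ otp (L α) = Ordinal.lift.{1} α.cof.ord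

/-- the ladder system `L` on `S` has the uniformization property -/
def HasUniformization (S : Set Ordinal.{0}) (L : Ordinal.{0} → Set Ordinal.{0}) : Prop :=
  ∀ c : Ordinal.{0} → Ordinal.{0} → Bool,
    ∃ f : Ordinal.{0} → Bool,
      ∀ α ∈ S, Order.IsSuccLimit α → sSup {β | β ∈ L α ∧ c α β ≠ f β} < α

/-- `𝒳` is a stationary family of sets in `[λ⁺]^{<λ}` -/
def IsStationaryFamily (lam : Cardinal.{0}) (𝒳 : Set (Set Ordinal.{0})) : Prop :=
  (∀ X ∈ 𝒳, X ⊆ Set.Iio (succOrd lam) ∧ #X < Cardinal.lift.{1} lam) ∧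
  ∀ f : Finset Ordinal.{0} → Ordinal.{0},
    (∀ s : Finset Ordinal.{0}, ↑s ⊆ Set.Iio (succOrd lam) → f s < succOrd lam) →
    ∃ X ∈ 𝒳, ∀ s : Finset Ordinal.{0}, ↑s ⊆ X → f s ∈ X

/-- the principle `(1)_S` -/
def Princ1 (lam : Cardinal.{0}) (S : Set Ordinal.{0}) : Prop :=
  ∃ 𝒳 : Set (Set Ordinal.{0}), IsStationaryFamily lam 𝒳 ∧
    (∀ X ∈ 𝒳, ∀ Y ∈ 𝒳, sSup X = sSup Y → X = Y) ∧
    ∀ X ∈ 𝒳, sSup X ∈ S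

/-- the principle `(λ)_S` -/
def PrincLam (lam : Cardinal.{0}) (S : Set Ordinal.{0}) : Prop :=
  ∃ 𝒳 : Set (Set Ordinal.{0}), IsStationaryFamily lam 𝒳 ∧
    (∀ β : Ordinal.{0}, #{X | X ∈ 𝒳 ∧ sSup X = β} ≤ Cardinal.lift.{1} lam) ∧
    ∀ X ∈ 𝒳, sSup X ∈ S

/-- `NS_{λ⁺} ↾ S` is saturated -/
def Saturated (lam : Cardinal.{0}) (S : Set Ordinal.{0}) : Prop :=
  ∀ F : Ordinal.{0} → Set Ordinal.{0},
    (∀ i < succ2Ord lam, F i ⊆ S ∧ IsStationaryIn (F i) (succOrd lam)) →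
    (∀ i j, i < j → j < succ2Ord lam → F i ≠ F j) →
    ∃ i j, i < j ∧ j < succ2Ord lam ∧ IsStationaryIn (F i ∩ F j) (succOrd lam)

/-- `(T, lt)` is a `λ⁺`-Souslin tree, with height function `ht`. -/
def IsSouslinTree (lam : Cardinal.{0}) (T : Type) (lt : T → T → Prop)
    (ht : T → Ordinal.{0}) : Prop :=
  (∀ x, ¬ lt x x) ∧
  (∀ x y z, lt x y → lt y z → lt x z) ∧
  (∀ x y z, lt x z → lt y z → lt x y ∨ x = y ∨ lt y x) ∧
  (∀ x y, lt x y → ht x < ht y) ∧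
  (∀ x, ∀ β < ht x, ∃! y, lt y x ∧ ht y = β) ∧
  (∀ x, ht x < succOrd lam) ∧
  (∀ α < succOrd lam, ∃ x, ht x = α) ∧
  (∀ α : Ordinal.{0}, #{x : T | ht x = α} ≤ lam) ∧
  (∀ A : Set T, (∀ x ∈ A, ∀ y ∈ A, x = y ∨ lt x y ∨ lt y x) → #A < Order.succ lam) ∧
  (∀ A : Set T, (∀ x ∈ A, ∀ y ∈ A, x ≠ y → ¬ lt x y ∧ ¬ lt y x) → #A < Order.succ lam)

/-- the set of cardinalities of `⊇`-cofinal subfamilies of `[λ]^σ` -/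
def covFamilies (lam σ : Cardinal.{0}) : Set Cardinal.{1} :=
  {c | ∃ D : Set (Set Ordinal.{0}),
    (∀ X ∈ D, X ⊆ Set.Iio lam.ord ∧ #X = Cardinal.lift.{1} σ) ∧
    (∀ Y : Set Ordinal.{0}, Y ⊆ Set.Iio lam.ord → #Y = Cardinal.lift.{1} σ →
      ∃ X ∈ D, Y ⊆ X) ∧
    #D = c}

/-- `cf([λ]^σ, ⊇)`, the least cardinality of a `⊇`-cofinal subfamily of `[λ]^σ` -/
def covNum (lam σ : Cardinal.{0}) : Cardinal.{1} := sInf (covFamilies lam σ)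

theorem IsClubIn.iInter {ι : Type} [Nonempty ι] {κ : Ordinal.{0}} {C : ι → Set Ordinal.{0}}
    (hκ : ℵ₀ < κ.cof) (hι : #ι < κ.cof) (hC : ∀ i, IsClubIn (C i) κ) :
    IsClubIn (⋂ i, C i) κ := by
  refine ⟨(Set.iInter_subset C (Classical.arbitrary ι)).trans (hC _).1, ?_,
    fun s hs hne hlt => Set.mem_iInter.2 fun i =>
      (hC i).2.2 s (hs.trans (Set.iInter_subset C i)) hne hlt⟩
  intro α hα
  choose! g hgC hge using fun i => (hC i).2.1
  -- `β (k + 1)` lies above a point of every `C i` that lies above `β k`, so every `C i`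
  -- is cofinal in `⨆ k, β k`.
  set β : ℕ → Ordinal.{0} := fun k => (fun γ => ⨆ i, g i γ)^[k] α
  have hβ_succ (k : ℕ) : β (k + 1) = ⨆ i, g i (β k) :=
    Function.iterate_succ_apply' _ _ _
  have hβ_lt (k : ℕ) : β k < κ := by
    induction k with
    | zero => exact hα
    | succ k ih =>
      rw [hβ_succ]
      exact Ordinal.iSup_lt_of_lt_cof hι fun i => (hC i).1 (hgC i _ ih)
  have hsup_lt : ⨆ k, β k < κ := Ordinal.iSup_lt_of_lt_cof (by rwa [Cardinal.mk_nat]) hβ_lt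
  have hsup_eq (i : ι) : ⨆ k, g i (β k) = ⨆ k, β k := by
    apply le_antisymm
    · refine Ordinal.iSup_le fun k => ?_
      calc g i (β k) ≤ β (k + 1) := hβ_succ k ▸ Ordinal.le_iSup (fun i => g i (β k)) i
        _ ≤ ⨆ k, β k := Ordinal.le_iSup β (k + 1)
    · exact Ordinal.iSup_le fun k =>
        (hge i _ (hβ_lt k)).trans (Ordinal.le_iSup (fun k => g i (β k)) k)
  refine ⟨⨆ k, β k, Set.mem_iInter.2 fun i => ?_, Ordinal.le_iSup β 0⟩
  have hlt : ⨆ k, g i (β k) < κ := hsup_eq i ▸ hsup_lt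
  rw [← hsup_eq i]
  exact (hC i).2.2 (Set.range fun k => g i (β k))
    (Set.range_subset_iff.2 fun k => hgC i _ (hβ_lt k)) (Set.range_nonempty _) hlt

theorem aleph0_lt_cof_succOrd {lam : Cardinal.{0}} (hinf : ℵ₀ ≤ lam) :
    ℵ₀ < (succOrd lam).cof := by
  rw [succOrd, (Cardinal.isRegular_succ hinf).cof_ord]
  exact hinf.trans_lt (Order.lt_succ lam)

section CountableInters

variable {β : Type*}

def countableInters (𝒜 : Set (Set β)) : Set (Set β) :=
  Set.range fun f : ℕ → 𝒜 => ⋂ n, (f n : Set β)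

theorem iInter_mem_countableInters {𝒜 : Set (Set β)} {f : ℕ → Set β} (hf : ∀ n, f n ∈ 𝒜) :
    ⋂ n, f n ∈ countableInters 𝒜 :=
  ⟨fun n => ⟨f n, hf n⟩, rfl⟩

theorem mem_countableInters_of_mem {𝒜 : Set (Set β)} {X : Set β} (hX : X ∈ 𝒜) :
    X ∈ countableInters 𝒜 := by
  have h := iInter_mem_countableInters (f := fun _ : ℕ => X) fun _ => hX
  rwa [Set.iInter_const] at h

theorem subset_of_mem_countableInters {𝒜 : Set (Set β)} {s X : Set β}
    (h𝒜 : ∀ Y ∈ 𝒜, Y ⊆ s) (hX : X ∈ countableInters 𝒜) : X ⊆ s := by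
  obtain ⟨f, rfl⟩ := hX
  exact (Set.iInter_subset _ 0).trans (h𝒜 _ (f 0).2)

theorem mk_countableInters_le (𝒜 : Set (Set β)) :
    #(countableInters 𝒜) ≤ #𝒜 ^ ℵ₀ := by
  refine Cardinal.mk_range_le.trans ?_
  simp

end CountableInters

/-- Closing the guesses under countable intersections costs nothing since `λ ^ ℵ₀ = λ`;
a club `C` is then guessed as `⋂ n, C n` for a chain of clubs each guessing the previous one. -/
theorem DiamondStar.diamondPlus {lam : Cardinal.{0}} (hinf : ℵ₀ ≤ lam) (hpow : lam ^ ℵ₀ = lam)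
    {S : Set Ordinal.{0}} (h : DiamondStar lam S) : DiamondPlus lam S := by
  obtain ⟨A, hA, hguess⟩ := h
  choose! F hF_club hF_guess using hguess
  refine ⟨fun α => countableInters (A α), fun α hα => ⟨fun X hX =>
    subset_of_mem_countableInters (hA α hα).1 hX, ?_⟩, fun Z hZ => ?_⟩
  · calc #(countableInters (A α)) ≤ #(A α) ^ ℵ₀ := mk_countableInters_le _
      _ ≤ Cardinal.lift.{1} lam ^ ℵ₀ := Cardinal.power_le_power_right (hA α hα).2
      _ = Cardinal.lift.{1} lam := by
        rw [← Cardinal.lift_aleph0.{1, 0}, ← Cardinal.lift_power, hpow]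
  set C : ℕ → Set Ordinal.{0} := fun n => F^[n + 1] Z
  have hC_succ (n : ℕ) : C (n + 1) = F (C n) := Function.iterate_succ_apply' _ _ _
  have hC_club (n : ℕ) : IsClubIn (C n) (succOrd lam) := by
    induction n with
    | zero => exact hF_club Z hZ
    | succ n ih => exact hC_succ n ▸ hF_club _ ih.1
  refine ⟨⋂ n, C n,
    IsClubIn.iInter (aleph0_lt_cof_succOrd hinf) (by simpa using aleph0_lt_cof_succOrd hinf)
      hC_club, ?_⟩
  rintro α ⟨hαC, hαS⟩
  have hαC := Set.mem_iInter.1 hαC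
  refine ⟨mem_countableInters_of_mem (hF_guess Z hZ α ⟨hαC 0, hαS⟩), ?_⟩
  rw [Set.iInter_inter]
  exact iInter_mem_countableInters fun n =>
    hF_guess _ (hC_club n).1 α ⟨hC_succ n ▸ hαC (n + 1), hαS⟩

theorem DiamondPlus.diamondStar {lam : Cardinal.{0}} {S : Set Ordinal.{0}}
    (h : DiamondPlus lam S) : DiamondStar lam S := by
  obtain ⟨A, hA, hguess⟩ := h
  exact ⟨A, hA, fun Z hZ => (hguess Z hZ).imp fun _ hC => ⟨hC.1, fun α hα => (hC.2 α hα).1⟩⟩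

theorem stmt6 (lam : Cardinal.{0}) (hinf : Cardinal.aleph0 ≤ lam)
    (hpow : lam ^ Cardinal.aleph0 = lam) :
    ∀ S ⊆ Set.Iio (succOrd lam), IsStationaryIn S (succOrd lam) →
      (DiamondStar lam S ↔ DiamondPlus lam S) :=
  fun _ _ _ => ⟨DiamondStar.diamondPlus hinf hpow, DiamondPlus.diamondStar⟩

end DiamondSurvey
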